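/- The number of Dyck paths of length 2n with exactly v up-steps in even-indexed positions (positions indexed starting from 1) equals the Narayana number N(n,v), for n ≥ 1 and 0 ≤ v ≤ n-1. -/

import Mathlib

open Finset
open scoped Classical

/-- Extend a finite step sequence to ℕ (false outside range). -/
def extS {m : ℕ} (s : Fin m → Bool) : ℕ → Bool :=
  fun j => if h : j < m then s ⟨j, h⟩ else false

/-- Number of up-steps (true entries) among the first `k` steps. -/
def upsTo {m : ℕ} (s : Fin m → Bool) (k : ℕ) : ℕ :=
  ((Finset.range k).filter (fun j => extS s j = true)).card

/-- A bilateral Dyck path of length 2n: a ±1-sequence with sum 0,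
encoded as a Bool sequence with exactly n `true`s. -/
def isBilateral (n : ℕ) (s : Fin (2*n) → Bool) : Prop := upsTo s (2*n) = n

/-- A Dyck path of length 2n: sum 0 and all partial sums nonnegative
(`k ≤ 2 * upsTo s k` says #ups ≥ #downs among the first k steps). -/
def isDyck (n : ℕ) (s : Fin (2*n) → Bool) : Prop :=
  upsTo s (2*n) = n ∧ ∀ k ≤ 2*n, k ≤ 2 * upsTo s k

/-- Interior peaks: 1-indexed positions i (1 ≤ i ≤ m-1) with step i up
and step i+1 down; 0-indexed j = i-1 ranges over `range (m-1)`. -/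
def interiorPeaks {m : ℕ} (s : Fin m → Bool) : ℕ :=
  ((Finset.range (m-1)).filter (fun j => extS s j = true ∧ extS s (j+1) = false)).card

/-- Peaks with the boundary convention: the initial vertex is a peak if the
first step is down, the final vertex is a peak if the last step is up. -/
def bPeaks (n : ℕ) (s : Fin (2*n) → Bool) : ℕ :=
  interiorPeaks s + (if extS s 0 = false then 1 else 0)
    + (if extS s (2*n-1) = true then 1 else 0)

/-- Number of up-steps at even 1-indexed positions (odd 0-indexed). -/
def evenUps (n : ℕ) (s : Fin (2*n) → Bool) : ℕ :=
  ((Finset.range (2*n)).filter (fun j => j % 2 = 1 ∧ extS s j = true)).card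

/-- Number of up-steps at odd 1-indexed positions (even 0-indexed). -/
def oddUps (n : ℕ) (s : Fin (2*n) → Bool) : ℕ :=
  ((Finset.range (2*n)).filter (fun j => j % 2 = 0 ∧ extS s j = true)).card

/-- Number of ones (arrows) in a Boolean sequence. -/
def ones {m : ℕ} (f : Fin m → Bool) : ℕ := upsTo f m

/-- 1-indexed position of the h-th one in `f`: the least `k` such that the
first `k` entries contain exactly `h` ones. -/
noncomputable def nthOnePos {m : ℕ} (f : Fin m → Bool) (h : ℕ) : ℕ := sInf {k | upsTo f k = h}

/-- A checkmark pair of size n. -/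
def isCheckPair (n : ℕ) (p : (Fin n → Bool) × (Fin (n-1) → Bool)) : Prop :=
  ones p.1 = ones p.2 ∨ ones p.1 = ones p.2 + 1

/-- A Dyck checkmark pair of size n. -/
def isDyckCheckPair (n : ℕ) (p : (Fin n → Bool) × (Fin (n-1) → Bool)) : Prop :=
  isCheckPair n p ∧ ∀ h, 1 ≤ h → h ≤ ones p.2 → nthOnePos p.2 h < nthOnePos p.1 h

/-- Narayana number N(n,v) = C(n,v)C(n-1,v)/(v+1). -/
def narayana (n v : ℕ) : ℕ := n.choose v * (n-1).choose v / (v + 1)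

/-- The bijection φ: s_NW(i) = 1 iff step 2i-1 (1-indexed) is down;
s_SW(i) = 1 iff step 2i (1-indexed) is up. -/
def phiMap (n : ℕ) (s : Fin (2*n) → Bool) : (Fin n → Bool) × (Fin (n-1) → Bool) :=
  (fun i => ! extS s (2*(i:ℕ)), fun i => extS s (2*(i:ℕ)+1))

/-- Height (#ups − #downs) before step j (0-indexed). -/
def height {m : ℕ} (s : Fin m → Bool) (j : ℕ) : ℤ := 2 * (upsTo s j : ℤ) - j

/-- Step j lies in an odd band: an up-step from even height, or a down-step
from odd height. -/
def inOddBand {m : ℕ} (s : Fin m → Bool) (j : ℕ) : Prop :=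
  (extS s j = true ∧ Even (height s j)) ∨ (extS s j = false ∧ Odd (height s j))

/-!
Read a path of length `2n` two steps at a time: `phiMap` records the down-steps at odd positions
in a word `F` of length `n` and the up-steps at even positions in a word `G` of length `n - 1`
(the last step of a Dyck path is down). Dyck paths with `v` up-steps at even positions become the
pairs with `v` ones in each word such that no prefix `F[0, m]` has more ones than `G[0, m)`.
Swapping the tails of `F` and `G` after the first such crossing is André's reflection: it matches
the crossing pairs with all pairs having `v + 1` and `v - 1` ones. Hence the count is
`C(n, v) C(n - 1, v) - C(n, v + 1) C(n - 1, v - 1) = N(n, v)`.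
-/

section UpsTo

variable {m : ℕ}

lemma extS_of_lt (s : Fin m → Bool) {j : ℕ} (h : j < m) : extS s j = s ⟨j, h⟩ := by
  simp [extS, h]

lemma extS_of_le (s : Fin m → Bool) {j : ℕ} (h : m ≤ j) : extS s j = false := by
  simp [extS, Nat.not_lt.2 h]

@[simp]
lemma upsTo_zero (s : Fin m → Bool) : upsTo s 0 = 0 := by
  simp [upsTo]

lemma upsTo_succ (s : Fin m → Bool) (k : ℕ) :
    upsTo s (k + 1) = upsTo s k + (extS s k).toNat := by
  unfold upsTo
  cases h : extS s k <;> simp [Finset.range_add_one, Finset.filter_insert, h]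

lemma upsTo_succ_le (s : Fin m → Bool) (k : ℕ) : upsTo s (k + 1) ≤ upsTo s k + 1 := by
  rw [upsTo_succ]
  exact Nat.add_le_add_left (Bool.toNat_le _) _

lemma upsTo_mono (s : Fin m → Bool) : Monotone (upsTo s) := fun _ _ h =>
  Finset.card_le_card (Finset.filter_subset_filter _ (Finset.range_subset_range.2 h))

lemma upsTo_eq_ones_of_le (s : Fin m → Bool) {k : ℕ} (h : m ≤ k) : upsTo s k = ones s := by
  induction k, h using Nat.le_induction with
  | base => rfl
  | succ k hk ih => rw [upsTo_succ, extS_of_le s hk, ih]; rfl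

lemma upsTo_le_ones (s : Fin m → Bool) (k : ℕ) : upsTo s k ≤ ones s := by
  rw [← upsTo_eq_ones_of_le s (le_max_right k m)]
  exact upsTo_mono s (le_max_left k m)

/-- The additive form of `upsTo x (b + d) - upsTo x (a + d) = upsTo y b - upsTo y a`. -/
lemma upsTo_add_eq_of_shift {m' : ℕ} (x : Fin m → Bool) (y : Fin m' → Bool) {a b d : ℕ}
    (hab : a ≤ b) (h : ∀ j, a ≤ j → j < b → extS x (j + d) = extS y j) :
    upsTo x (b + d) + upsTo y a = upsTo x (a + d) + upsTo y b := by
  induction b, hab using Nat.le_induction with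
  | base => rfl
  | succ b hab ih =>
    rw [show b + 1 + d = b + d + 1 by omega, upsTo_succ, upsTo_succ y,
      h b hab (Nat.lt_succ_self b)]
    have := ih fun j hj hjb => h j hj (by omega)
    omega

lemma upsTo_congr {m' : ℕ} (x : Fin m → Bool) (y : Fin m' → Bool) {k : ℕ}
    (h : ∀ j < k, extS x j = extS y j) : upsTo x k = upsTo y k := by
  simpa using upsTo_add_eq_of_shift x y (Nat.zero_le k) (d := 0) fun j _ hj => h j hj

lemma ones_eq_card (s : Fin m → Bool) : ones s = #{i | s i = true} := by
  rw [ones, upsTo, Finset.card_filter, Finset.card_filter, ← Fin.sum_univ_eq_sum_range]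
  simp [extS]

lemma card_ones_eq_choose (m v : ℕ) : #{s : Fin m → Bool | ones s = v} = m.choose v := by
  calc _ = #(powersetCard v (univ : Finset (Fin m))) := ?_
    _ = m.choose v := by simp
  refine Finset.card_nbij' (fun s => ({i | s i = true} : Finset (Fin m)))
    (fun t i => decide (i ∈ t)) ?_ ?_ ?_ ?_
  · intro s hs
    simp_all [ones_eq_card]
  · intro t ht
    simp_all [ones_eq_card]
  · intro s _
    funext i
    simp
  · intro t _
    ext i
    simp

end UpsTo

abbrev SeqPair (n : ℕ) : Type := (Fin n → Bool) × (Fin (n - 1) → Bool)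

section Phi

variable {n : ℕ}

lemma extS_phiMap_fst (s : Fin (2 * n) → Bool) {i : ℕ} (hi : i < n) :
    extS (phiMap n s).1 i = !extS s (2 * i) := by
  simp [phiMap, extS, hi]

lemma extS_phiMap_snd (s : Fin (2 * n) → Bool) {i : ℕ} (hi : i < n - 1) :
    extS (phiMap n s).2 i = extS s (2 * i + 1) := by
  simp [phiMap, extS, hi]

/-- Each step of `s` raises exactly one side. -/
lemma upsTo_add_upsTo_phiMap_fst (s : Fin (2 * n) → Bool) {j : ℕ} (hj : j < 2 * n) :
    upsTo s j + upsTo (phiMap n s).1 ((j + 1) / 2)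
      = (j + 1) / 2 + upsTo (phiMap n s).2 (j / 2) := by
  induction j with
  | zero => simp
  | succ j ih =>
    have ih := ih (by omega)
    rcases Nat.even_or_odd' j with ⟨m, rfl | rfl⟩
    · rw [show (2 * m + 1 + 1) / 2 = m + 1 by omega, show (2 * m + 1) / 2 = m by omega,
        show (2 * m) / 2 = m by omega] at *
      rw [upsTo_succ, upsTo_succ (phiMap n s).1, extS_phiMap_fst s (by omega)]
      cases extS s (2 * m) <;>
        simp only [Bool.not_false, Bool.not_true, Bool.toNat_false, Bool.toNat_true] <;> omega
    · rw [show (2 * m + 1 + 1 + 1) / 2 = m + 1 by omega,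
        show (2 * m + 1 + 1) / 2 = m + 1 by omega, show (2 * m + 1) / 2 = m by omega] at *
      rw [upsTo_succ, upsTo_succ (phiMap n s).2, extS_phiMap_snd s (by omega)]
      omega

lemma upsTo_two_mul_add_upsTo_phiMap_fst (s : Fin (2 * n) → Bool) {m : ℕ} (hm : m < n) :
    upsTo s (2 * m) + upsTo (phiMap n s).1 m = m + upsTo (phiMap n s).2 m := by
  have h := upsTo_add_upsTo_phiMap_fst s (j := 2 * m) (by omega)
  rwa [show (2 * m + 1) / 2 = m by omega, show 2 * m / 2 = m by omega] at h

lemma upsTo_two_mul_add_one_add_upsTo_phiMap_fst (s : Fin (2 * n) → Bool) {m : ℕ}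
    (hm : m < n) :
    upsTo s (2 * m + 1) + upsTo (phiMap n s).1 (m + 1) = m + 1 + upsTo (phiMap n s).2 m := by
  have h := upsTo_add_upsTo_phiMap_fst s (j := 2 * m + 1) (by omega)
  rwa [show (2 * m + 1 + 1) / 2 = m + 1 by omega, show (2 * m + 1) / 2 = m by omega] at h

lemma upsTo_add_ones_phiMap_fst (s : Fin (2 * n) → Bool) :
    upsTo s (2 * n) + ones (phiMap n s).1
      = n + ones (phiMap n s).2 + (extS s (2 * n - 1)).toNat := by
  rcases Nat.eq_zero_or_pos n with rfl | hn
  · simp [ones, extS]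
  have h := upsTo_two_mul_add_one_add_upsTo_phiMap_fst s (m := n - 1) (by omega)
  rw [show 2 * (n - 1) + 1 = 2 * n - 1 by omega, show n - 1 + 1 = n by omega] at h
  rw [show upsTo s (2 * n) = upsTo s (2 * n - 1 + 1) from congrArg _ (by omega), upsTo_succ]
  unfold ones
  omega

lemma evenUps_eq_ones_phiMap_snd (s : Fin (2 * n) → Bool) :
    evenUps n s = ones (phiMap n s).2 + (extS s (2 * n - 1)).toNat := by
  rcases Nat.eq_zero_or_pos n with rfl | hn
  · simp [evenUps, ones, upsTo, extS]
  have hodd : evenUps n s = #{i ∈ range n | extS s (2 * i + 1) = true} := by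
    refine Finset.card_nbij' (· / 2) (2 * · + 1) ?_ ?_ ?_ ?_
    · intro j hj
      simp only [coe_filter, Finset.mem_range, Set.mem_ofPred_eq] at hj ⊢
      exact ⟨by omega, by rw [show 2 * (j / 2) + 1 = j by omega]; exact hj.2.2⟩
    · intro i hi
      simp only [coe_filter, Finset.mem_range, Set.mem_ofPred_eq] at hi ⊢
      exact ⟨by omega, by omega, hi.2⟩
    · intro j hj
      simp only [coe_filter, Finset.mem_range, Set.mem_ofPred_eq] at hj
      show 2 * (j / 2) + 1 = j
      omega
    · intro i _
      show (2 * i + 1) / 2 = i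
      omega
  have hsnd : ones (phiMap n s).2 = #{i ∈ range (n - 1) | extS s (2 * i + 1) = true} := by
    unfold ones upsTo
    congr 1
    exact Finset.filter_congr fun i hi => by rw [extS_phiMap_snd s (Finset.mem_range.1 hi)]
  rw [hodd, hsnd, show range n = range (n - 1 + 1) by rw [Nat.sub_add_cancel hn],
    Finset.range_add_one, Finset.filter_insert, show 2 * n - 1 = 2 * (n - 1) + 1 by omega]
  split_ifs with h
  · rw [Finset.card_insert_of_notMem (by simp), h]; rfl
  · simp_all

end Phi

section Ballot

variable {n : ℕ}

def CrossesAt (p : SeqPair n) (m : ℕ) : Prop := upsTo p.2 m < upsTo p.1 (m + 1)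

def IsBallotPair (v : ℕ) (p : SeqPair n) : Prop :=
  ones p.1 = v ∧ ones p.2 = v ∧ ∀ m, ¬CrossesAt p m

lemma upsTo_fst_le_upsTo_snd {p : SeqPair n} (hp : ∀ m, ¬CrossesAt p m) (m : ℕ) :
    upsTo p.1 m ≤ upsTo p.2 m := by
  cases m with
  | zero => simp
  | succ m => exact (not_lt.1 (hp m)).trans (upsTo_mono _ m.le_succ)

def phiInv (n : ℕ) (p : SeqPair n) : Fin (2 * n) → Bool :=
  fun j => if (j : ℕ) % 2 = 0 then !extS p.1 (j / 2) else extS p.2 (j / 2)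

lemma phiMap_phiInv (p : SeqPair n) : phiMap n (phiInv n p) = p := by
  ext i
  · simp [phiMap, phiInv, extS]
  · have hi := i.isLt
    change extS (phiInv n p) (2 * i + 1) = p.2 i
    rw [extS_of_lt _ (by omega)]
    simp only [phiInv, show (2 * (i : ℕ) + 1) % 2 ≠ 0 by omega, if_false,
      show (2 * (i : ℕ) + 1) / 2 = i by omega, extS_of_lt _ hi]

lemma extS_phiInv_last (p : SeqPair n) : extS (phiInv n p) (2 * n - 1) = false := by
  rcases Nat.eq_zero_or_pos n with rfl | hn
  · simp [extS]
  rw [extS_of_lt _ (by omega)]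
  simp only [phiInv, show (2 * n - 1) % 2 ≠ 0 by omega, if_false,
    show (2 * n - 1) / 2 = n - 1 by omega]
  exact extS_of_le _ le_rfl

lemma phiInv_phiMap {s : Fin (2 * n) → Bool} (hs : extS s (2 * n - 1) = false) :
    phiInv n (phiMap n s) = s := by
  funext j
  have hj := j.isLt
  rw [← extS_of_lt s hj]
  by_cases hpar : (j : ℕ) % 2 = 0
  · simp only [phiInv, hpar, if_true, extS_phiMap_fst s (by omega : (j : ℕ) / 2 < n),
      Bool.not_not, show 2 * ((j : ℕ) / 2) = j by omega]
  · simp only [phiInv, hpar, if_false]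
    by_cases hlt : (j : ℕ) / 2 < n - 1
    · rw [extS_phiMap_snd s hlt, show 2 * ((j : ℕ) / 2) + 1 = j by omega]
    · rw [extS_of_le _ (by omega), show (j : ℕ) = 2 * n - 1 by omega, hs]

lemma extS_last_of_isDyck {s : Fin (2 * n) → Bool} (hs : isDyck n s) :
    extS s (2 * n - 1) = false := by
  rcases Nat.eq_zero_or_pos n with rfl | hn
  · simp [extS]
  obtain ⟨htotal, hprefix⟩ := hs
  have hlast := hprefix (2 * n - 1) (by omega)
  rw [show upsTo s (2 * n) = upsTo s (2 * n - 1 + 1) from congrArg _ (by omega), upsTo_succ]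
    at htotal
  cases h : extS s (2 * n - 1)
  · rfl
  · simp only [h, Bool.toNat_true] at htotal
    omega

/-- The Dyck condition at the prefix length `2m + 1` is the absence of a crossing at `m`; at even
lengths it follows from the odd ones. -/
lemma isDyck_and_evenUps_iff (s : Fin (2 * n) → Bool) (v : ℕ) :
    isDyck n s ∧ evenUps n s = v ↔
      extS s (2 * n - 1) = false ∧ IsBallotPair v (phiMap n s) := by
  have htotal := upsTo_add_ones_phiMap_fst s
  have heven := evenUps_eq_ones_phiMap_snd s
  constructor
  · rintro ⟨hs, hv⟩
    have hlast := extS_last_of_isDyck hs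
    have hup := hs.1
    simp only [hlast, Bool.toNat_false, add_zero] at htotal heven
    refine ⟨hlast, by omega, by omega, fun m hm => ?_⟩
    unfold CrossesAt at hm
    by_cases hmn : m < n
    · have h := upsTo_two_mul_add_one_add_upsTo_phiMap_fst s hmn
      have := hs.2 (2 * m + 1) (by omega)
      omega
    · rw [upsTo_eq_ones_of_le _ (by omega), upsTo_eq_ones_of_le _ (by omega)] at hm
      omega
  · rintro ⟨hlast, hfst, hsnd, hp⟩
    simp only [hlast, Bool.toNat_false, add_zero] at htotal heven
    refine ⟨⟨by omega, fun k hk => ?_⟩, by omega⟩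
    rcases Nat.even_or_odd' k with ⟨m, rfl | rfl⟩
    · rcases (show m < n ∨ m = n by omega) with hm | rfl
      · have h := upsTo_two_mul_add_upsTo_phiMap_fst s hm
        have := upsTo_fst_le_upsTo_snd hp m
        omega
      · omega
    · have h := upsTo_two_mul_add_one_add_upsTo_phiMap_fst s (m := m) (by omega)
      have := not_lt.1 (hp m)
      omega

lemma card_dyck_evenUps_eq_card_ballotPair (n v : ℕ) :
    #{s : Fin (2 * n) → Bool | isDyck n s ∧ evenUps n s = v}
      = #{p : SeqPair n | IsBallotPair v p} := by
  refine Finset.card_nbij' (phiMap n) (phiInv n) ?_ ?_ ?_ ?_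
  all_goals simp only [Set.MapsTo, Set.LeftInvOn, coe_filter, Finset.mem_univ, true_and,
    Set.mem_ofPred_eq, isDyck_and_evenUps_iff]
  · exact fun s hs => hs.2
  · exact fun p hp => ⟨extS_phiInv_last p, by rwa [phiMap_phiInv]⟩
  · exact fun s hs => phiInv_phiMap hs.1
  · exact fun p _ => phiMap_phiInv p

end Ballot

section Reflection

variable {n : ℕ}

def swapTails (m : ℕ) (p : SeqPair n) : SeqPair n :=
  (fun i => if (i : ℕ) ≤ m then p.1 i else extS p.2 (i - 1),
   fun i => if (i : ℕ) < m then p.2 i else extS p.1 (i + 1))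

lemma extS_swapTails_fst (m : ℕ) (p : SeqPair n) {j : ℕ} (hj : j < n) :
    extS (swapTails m p).1 j = if j ≤ m then extS p.1 j else extS p.2 (j - 1) := by
  simp [swapTails, extS, hj]

lemma extS_swapTails_snd (m : ℕ) (p : SeqPair n) {j : ℕ} (hj : j < n - 1) :
    extS (swapTails m p).2 j = if j < m then extS p.2 j else extS p.1 (j + 1) := by
  simp [swapTails, extS, hj]

lemma swapTails_swapTails (m : ℕ) (p : SeqPair n) : swapTails m (swapTails m p) = p := by
  ext i
  · by_cases h : (i : ℕ) ≤ m
    · simp [swapTails, h]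
    · rw [show (swapTails m (swapTails m p)).1 i = extS (swapTails m p).2 (i - 1) from if_neg h,
        extS_swapTails_snd m p (by omega), if_neg (by omega), Nat.sub_add_cancel (by omega),
        extS_of_lt]
  · by_cases h : (i : ℕ) < m
    · simp [swapTails, h]
    · rw [show (swapTails m (swapTails m p)).2 i = extS (swapTails m p).1 (i + 1) from if_neg h,
        extS_swapTails_fst m p (by omega), if_neg (by omega), Nat.add_sub_cancel, extS_of_lt]

lemma upsTo_swapTails_fst (m : ℕ) (p : SeqPair n) {k : ℕ} (hk : k ≤ m + 1) :
    upsTo (swapTails m p).1 k = upsTo p.1 k := by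
  refine upsTo_congr _ _ fun j hj => ?_
  by_cases hjn : j < n
  · rw [extS_swapTails_fst m p hjn, if_pos (by omega)]
  · rw [extS_of_le _ (by omega), extS_of_le _ (by omega)]

lemma upsTo_swapTails_snd (m : ℕ) (p : SeqPair n) {k : ℕ} (hk : k ≤ m) :
    upsTo (swapTails m p).2 k = upsTo p.2 k := by
  refine upsTo_congr _ _ fun j hj => ?_
  by_cases hjn : j < n - 1
  · rw [extS_swapTails_snd m p hjn, if_pos (by omega)]
  · rw [extS_of_le _ (by omega), extS_of_le _ (by omega)]

lemma ones_swapTails_fst {m : ℕ} (p : SeqPair n) (hm : m < n) :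
    ones (swapTails m p).1 + upsTo p.2 m = upsTo p.1 (m + 1) + ones p.2 := by
  have h := upsTo_add_eq_of_shift (swapTails m p).1 p.2 (a := m) (b := n - 1) (d := 1) (by omega)
    fun j hj hjb => by rw [extS_swapTails_fst m p (by omega), if_neg (by omega), Nat.add_sub_cancel]
  rwa [Nat.sub_add_cancel (by omega), upsTo_swapTails_fst m p le_rfl] at h

lemma ones_swapTails_snd {m : ℕ} (p : SeqPair n) (hm : m < n) :
    ones (swapTails m p).2 + upsTo p.1 (m + 1) = upsTo p.2 m + ones p.1 := by
  have h := upsTo_add_eq_of_shift p.1 (swapTails m p).2 (a := m) (b := n - 1) (d := 1) (by omega)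
    fun j hj hjb => by rw [extS_swapTails_snd m p hjb, if_neg (by omega)]
  rw [Nat.sub_add_cancel (by omega), upsTo_swapTails_snd m p le_rfl] at h
  unfold ones
  omega

lemma crossesAt_swapTails_iff {m k : ℕ} (p : SeqPair n) (hk : k ≤ m) :
    CrossesAt (swapTails m p) k ↔ CrossesAt p k := by
  rw [CrossesAt, CrossesAt, upsTo_swapTails_fst m p (by omega), upsTo_swapTails_snd m p hk]

lemma crossesAt_of_ones_lt {p : SeqPair n} (h : ones p.2 < ones p.1) : CrossesAt p (n - 1) := by
  rwa [CrossesAt, upsTo_eq_ones_of_le p.1 (by omega)]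

noncomputable def firstCrossing (p : SeqPair n) : ℕ := sInf {m | CrossesAt p m}

lemma crossesAt_firstCrossing {p : SeqPair n} (h : ∃ m, CrossesAt p m) :
    CrossesAt p (firstCrossing p) :=
  Nat.sInf_mem h

lemma not_crossesAt_of_lt_firstCrossing {p : SeqPair n} {m : ℕ} (hm : m < firstCrossing p) :
    ¬CrossesAt p m :=
  Nat.notMem_of_lt_sInf (s := {m | CrossesAt p m}) hm

lemma firstCrossing_le {p : SeqPair n} {m : ℕ} (hm : CrossesAt p m) : firstCrossing p ≤ m :=
  Nat.sInf_le (s := {m | CrossesAt p m}) hm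

lemma firstCrossing_eq {p : SeqPair n} {m : ℕ} (hm : CrossesAt p m)
    (hlt : ∀ k < m, ¬CrossesAt p k) : firstCrossing p = m :=
  le_antisymm (firstCrossing_le hm)
    (le_of_not_gt fun h => hlt _ h (crossesAt_firstCrossing ⟨m, hm⟩))

lemma firstCrossing_lt {p : SeqPair n} {m : ℕ} (hm : CrossesAt p m) : firstCrossing p < n := by
  by_cases hmn : m < n
  · exact (firstCrossing_le hm).trans_lt hmn
  have hones : ones p.2 < ones p.1 := by
    have h1 := upsTo_le_ones p.1 (m + 1)
    rw [CrossesAt, upsTo_eq_ones_of_le p.2 (by omega)] at hm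
    omega
  have hn : n ≠ 0 := by
    rintro rfl
    exact absurd hones (by simp [ones])
  exact (firstCrossing_le (crossesAt_of_ones_lt hones)).trans_lt (by omega)

lemma upsTo_fst_firstCrossing {p : SeqPair n} (h : ∃ m, CrossesAt p m) :
    upsTo p.1 (firstCrossing p + 1) = upsTo p.2 (firstCrossing p) + 1 := by
  have hcross := crossesAt_firstCrossing h
  unfold CrossesAt at hcross
  rcases Nat.eq_zero_or_pos (firstCrossing p) with h0 | hpos
  · have := upsTo_succ_le p.1 0
    simp only [h0, zero_add, upsTo_zero] at this hcross ⊢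
    omega
  · have hprev := not_crossesAt_of_lt_firstCrossing (Nat.sub_one_lt_of_lt hpos)
    unfold CrossesAt at hprev
    rw [Nat.sub_add_cancel hpos] at hprev
    have := upsTo_succ_le p.1 (firstCrossing p)
    have := upsTo_mono p.2 (Nat.sub_le (firstCrossing p) 1)
    omega

noncomputable def reflect (p : SeqPair n) : SeqPair n := swapTails (firstCrossing p) p

lemma firstCrossing_reflect {p : SeqPair n} (h : ∃ m, CrossesAt p m) :
    firstCrossing (reflect p) = firstCrossing p :=
  firstCrossing_eq ((crossesAt_swapTails_iff p le_rfl).2 (crossesAt_firstCrossing h))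
    fun _ hk => (crossesAt_swapTails_iff p hk.le).not.2 (not_crossesAt_of_lt_firstCrossing hk)

lemma exists_crossesAt_reflect {p : SeqPair n} (h : ∃ m, CrossesAt p m) :
    ∃ m, CrossesAt (reflect p) m :=
  ⟨_, (crossesAt_swapTails_iff p le_rfl).2 (crossesAt_firstCrossing h)⟩

lemma reflect_reflect {p : SeqPair n} (h : ∃ m, CrossesAt p m) : reflect (reflect p) = p := by
  rw [reflect, firstCrossing_reflect h, reflect, swapTails_swapTails]

lemma ones_reflect_fst {p : SeqPair n} (h : ∃ m, CrossesAt p m) :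
    ones (reflect p).1 = ones p.2 + 1 := by
  have := ones_swapTails_fst p (firstCrossing_lt h.choose_spec)
  have := upsTo_fst_firstCrossing h
  unfold reflect
  omega

lemma ones_reflect_snd {p : SeqPair n} (h : ∃ m, CrossesAt p m) :
    ones (reflect p).2 + 1 = ones p.1 := by
  have := ones_swapTails_snd p (firstCrossing_lt h.choose_spec)
  have := upsTo_fst_firstCrossing h
  unfold reflect
  omega

/-- André's reflection principle. -/
lemma card_crossing_eq {a b : ℕ} (hab : a ≤ b + 1) :
    #{p : SeqPair n | ones p.1 = a ∧ ones p.2 = b ∧ ∃ m, CrossesAt p m}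
      = #{q : SeqPair n | ones q.1 = b + 1 ∧ ones q.2 + 1 = a} := by
  refine Finset.card_nbij' reflect reflect ?_ ?_ ?_ ?_
  all_goals simp only [coe_filter, Finset.mem_univ, true_and]
  · rintro p ⟨ha, hb, hp⟩
    exact ⟨by rw [ones_reflect_fst hp, hb], by rw [ones_reflect_snd hp, ha]⟩
  · rintro q ⟨hb, ha⟩
    have hq : ∃ m, CrossesAt q m := ⟨_, crossesAt_of_ones_lt (by omega)⟩
    refine ⟨by rw [ones_reflect_fst hq, ha], by have := ones_reflect_snd hq; omega,
      exists_crossesAt_reflect hq⟩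
  · rintro p ⟨-, -, hp⟩
    exact reflect_reflect hp
  · rintro q ⟨hb, ha⟩
    exact reflect_reflect ⟨_, crossesAt_of_ones_lt (by omega)⟩

end Reflection

lemma card_seqPair_ones_eq_choose_mul (n a b : ℕ) :
    #{p : SeqPair n | ones p.1 = a ∧ ones p.2 = b} = n.choose a * (n - 1).choose b := by
  rw [← Finset.univ_product_univ,
    Finset.filter_product (fun f => ones f = a) (fun g => ones g = b),
    Finset.card_product, card_ones_eq_choose, card_ones_eq_choose]

/-- `N(n, v + 1) = C(n, v + 1) C(n - 1, v + 1) - C(n, v + 2) C(n - 1, v)`, stated without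
truncated subtraction. -/
lemma narayana_add_one_add (n v : ℕ) :
    narayana n (v + 1) + n.choose (v + 2) * (n - 1).choose v
      = n.choose (v + 1) * (n - 1).choose (v + 1) := by
  set X := n.choose (v + 1) * (n - 1).choose (v + 1)
  set Y := n.choose (v + 2) * (n - 1).choose v
  have key : (v + 2) * Y = (v + 1) * X := by
    have h1 := Nat.choose_succ_right_eq n (v + 1)
    have h2 := Nat.choose_succ_right_eq (n - 1) v
    rw [show n - 1 - v = n - (v + 1) by omega] at h2
    calc (v + 2) * Y = n.choose (v + 2) * (v + 2) * (n - 1).choose v := by ring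
      _ = n.choose (v + 1) * ((n - 1).choose v * (n - (v + 1))) := by rw [h1]; ring
      _ = (v + 1) * X := by rw [← h2]; ring
  have hYX : Y ≤ X := by nlinarith
  have hX : X / (v + 2) = X - Y := by
    refine Nat.div_eq_of_eq_mul_left (by omega) ?_
    zify [hYX] at key ⊢
    linear_combination key
  rw [narayana, hX]
  omega

lemma card_ballotPair (n v : ℕ) : #{p : SeqPair n | IsBallotPair v p} = narayana n v := by
  have hsplit : #{p : SeqPair n | IsBallotPair v p}
      + #{p : SeqPair n | ones p.1 = v ∧ ones p.2 = v ∧ ∃ m, CrossesAt p m}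
      = n.choose v * (n - 1).choose v := by
    rw [← card_seqPair_ones_eq_choose_mul, ← Finset.card_filter_add_card_filter_not
      (s := {p : SeqPair n | ones p.1 = v ∧ ones p.2 = v}) (fun p => ∀ m, ¬CrossesAt p m),
      Finset.filter_filter, Finset.filter_filter]
    congr 3 <;> ext p <;> simp [IsBallotPair, and_assoc]
  rw [card_crossing_eq v.le_succ] at hsplit
  cases v with
  | zero => simpa [narayana] using hsplit
  | succ v =>
    simp only [Nat.add_right_cancel_iff, card_seqPair_ones_eq_choose_mul] at hsplit
    rw [show v + 1 + 1 = v + 2 from rfl] at hsplit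
    have := narayana_add_one_add n v
    omega

theorem stmt4_general (n v : ℕ) :
    ((Finset.univ : Finset (Fin (2*n) → Bool)).filter
      (fun s => isDyck n s ∧ evenUps n s = v)).card = narayana n v := by
  rw [card_dyck_evenUps_eq_card_ballotPair, card_ballotPair]

theorem stmt4 (n v : ℕ) (hn : 1 ≤ n) (hv : v ≤ n - 1) :
    ((Finset.univ : Finset (Fin (2*n) → Bool)).filter
      (fun s => isDyck n s ∧ evenUps n s = v)).card = narayana n v :=
  stmt4_general n v
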